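/- arXiv:2002.09655 — 3 statements merged into one kernel-verified Lean document; each statement's English description precedes it below -/
import Mathlib

section
/- For every nonzero vector v ∈ ℝ², the subgroup {A ∈ SL(2,ℤ) : ∃ r ∈ ℝ, r > 0 and Av = rv} of SL(2,ℤ) (the stabilizer of the ray through v under the induced action of SL(2,ℤ) on rays) is either trivial or infinite cyclic. -/
open MeasureTheory

section Defs

variable {X : Type*} {Y : Type*}

/-- A countable Borel equivalence relation. -/
structure IsCBER [MeasurableSpace X] (E : X → X → Prop) : Prop where
  equivalence : Equivalence E
  borel : MeasurableSet {p : X × X | E p.1 p.2}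
  countable_classes : ∀ x, {y | E x y}.Countable

/-- Hyperfiniteness: an increasing union of finite Borel subequivalence relations. -/
def Hyperfinite [MeasurableSpace X] (E : X → X → Prop) : Prop :=
  ∃ F : ℕ → X → X → Prop,
    (∀ n, Equivalence (F n)) ∧
    (∀ n, MeasurableSet {p : X × X | F n p.1 p.2}) ∧
    (∀ n x y, F n x y → E x y) ∧
    (∀ n x, {y | F n x y}.Finite) ∧
    (∀ m n, m ≤ n → ∀ x y, F m x y → F n x y) ∧
    (∀ x y, E x y → ∃ n, F n x y)

/-- The restriction of a relation to a subset, as a relation on the subtype. -/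
def RestrictRel (E : X → X → Prop) (B : Set X) : ↥B → ↥B → Prop :=
  fun x y => E x.1 y.1

def HyperfiniteOn [MeasurableSpace X] (E : X → X → Prop) (B : Set X) : Prop :=
  Hyperfinite (RestrictRel E B)

def MuHyperfinite [MeasurableSpace X] (E : X → X → Prop) (μ : Measure X) : Prop :=
  ∃ C : Set X, MeasurableSet C ∧ μ Cᶜ = 0 ∧ HyperfiniteOn E C

def MeasureHyperfinite [MeasurableSpace X] (E : X → X → Prop) : Prop :=
  ∀ μ : Measure X, IsProbabilityMeasure μ → MuHyperfinite E μ

def MuNowhereHyperfinite [MeasurableSpace X] (E : X → X → Prop) (μ : Measure X) : Prop :=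
  ∀ B : Set X, MeasurableSet B → μ B ≠ 0 → ¬ HyperfiniteOn E B

def BorelReducible [MeasurableSpace X] [MeasurableSpace Y]
    (E : X → X → Prop) (F : Y → Y → Prop) : Prop :=
  ∃ f : X → Y, Measurable f ∧ ∀ x y, E x y ↔ F (f x) (f y)

def BorelEmbeddable [MeasurableSpace X] [MeasurableSpace Y]
    (E : X → X → Prop) (F : Y → Y → Prop) : Prop :=
  ∃ f : X → Y, Measurable f ∧ Function.Injective f ∧ ∀ x y, E x y ↔ F (f x) (f y)

def MuReducible [MeasurableSpace X] [MeasurableSpace Y]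
    (E : X → X → Prop) (μ : Measure X) (F : Y → Y → Prop) : Prop :=
  ∃ C : Set X, MeasurableSet C ∧ μ Cᶜ = 0 ∧ BorelReducible (RestrictRel E C) F

def MuEmbeddable [MeasurableSpace X] [MeasurableSpace Y]
    (E : X → X → Prop) (μ : Measure X) (F : Y → Y → Prop) : Prop :=
  ∃ C : Set X, MeasurableSet C ∧ μ Cᶜ = 0 ∧ BorelEmbeddable (RestrictRel E C) F

def MeasureReducible [MeasurableSpace X] [MeasurableSpace Y]
    (E : X → X → Prop) (F : Y → Y → Prop) : Prop :=
  ∀ μ : Measure X, IsProbabilityMeasure μ → MuReducible E μ F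

def MeasureEmbeddable [MeasurableSpace X] [MeasurableSpace Y]
    (E : X → X → Prop) (F : Y → Y → Prop) : Prop :=
  ∀ μ : Measure X, IsProbabilityMeasure μ → MuEmbeddable E μ F

def MuNowhereReducible [MeasurableSpace X] [MeasurableSpace Y]
    (E : X → X → Prop) (μ : Measure X) (F : Y → Y → Prop) : Prop :=
  ∀ B : Set X, MeasurableSet B → μ B ≠ 0 → ¬ BorelReducible (RestrictRel E B) F

def CountableToOne (f : X → Y) : Prop := ∀ y, (f ⁻¹' {y}).Countable

/-- Projective separability of a countable Borel equivalence relation `F` on `Y`. -/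
def ProjSeparable [MeasurableSpace Y] (F : Y → Y → Prop) : Prop :=
  ∀ (X : Type) [MeasurableSpace X] [StandardBorelSpace X]
    (E : X → X → Prop), IsCBER E →
    ∀ μ : Measure X, IsProbabilityMeasure μ → MuNowhereHyperfinite E μ →
    ∃ R : Set (X × Y), MeasurableSet R ∧ (∀ x, {y | (x, y) ∈ R}.Countable) ∧
      ∀ B : Set X, MeasurableSet B →
        ∀ φ : ↥B → Y, Measurable φ → CountableToOne φ →
          (∀ x y : ↥B, E x.1 y.1 → F (φ x) (φ y)) →
          μ {x : X | ∃ h : x ∈ B, (x, φ ⟨x, h⟩) ∉ R} = 0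

/-- Acyclicity: at most one injective path between any two points. -/
def AcyclicRel (G : X → X → Prop) : Prop :=
  ∀ (n m : ℕ) (p : Fin (n + 1) → X) (q : Fin (m + 1) → X),
    (∀ i : Fin n, G (p i.castSucc) (p i.succ)) →
    (∀ i : Fin m, G (q i.castSucc) (q i.succ)) →
    Function.Injective p → Function.Injective q →
    p 0 = q 0 → p (Fin.last n) = q (Fin.last m) →
    n = m ∧ ∀ (i : Fin (n + 1)) (j : Fin (m + 1)), (i : ℕ) = (j : ℕ) → p i = q j

def Treeable [MeasurableSpace X] (E : X → X → Prop) : Prop :=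
  ∃ G : X → X → Prop,
    (∀ x, ¬ G x x) ∧ (∀ x y, G x y → G y x) ∧
    MeasurableSet {p : X × X | G p.1 p.2} ∧
    (∀ x y, E x y ↔ Relation.EqvGen G x y) ∧ AcyclicRel G

def Saturation (E : X → X → Prop) (A : Set X) : Set X := {y | ∃ x ∈ A, E x y}

def QuasiInvariant [MeasurableSpace X] (E : X → X → Prop) (μ : Measure X) : Prop :=
  ∀ A : Set X, MeasurableSet A → μ A = 0 → μ (Saturation E A) = 0

def ErgodicRel [MeasurableSpace X] (E : X → X → Prop) (μ : Measure X) : Prop :=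
  ∀ A : Set X, MeasurableSet A → (∀ x y, E x y → x ∈ A → y ∈ A) → μ A = 0 ∨ μ Aᶜ = 0

def AperiodicRel (E : X → X → Prop) : Prop := ∀ x, {y | E x y}.Infinite

/-- `E` is a successor of `𝔼₀` under measure reducibility. -/
def SuccessorOfE0 [MeasurableSpace X] (E : X → X → Prop) : Prop :=
  ¬ MeasureHyperfinite E ∧
  ∀ (Y : Type) [MeasurableSpace Y] [StandardBorelSpace Y] (F : Y → Y → Prop),
    IsCBER F → MeasureReducible F E → ¬ MeasureHyperfinite F → MeasureReducible E F

/-- `ν` is `(E|B)`-invariant. -/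
def InvariantOn [MeasurableSpace X] (E : X → X → Prop) (B : Set X) (ν : Measure X) : Prop :=
  ∀ A : Set X, MeasurableSet A → A ⊆ B →
    ∀ f : X → X, Measurable f → Set.InjOn f A →
      (∀ x ∈ A, f x ∈ B ∧ E x (f x)) → ν A = ν (f '' A)

def InvariantMeasureHyperfinite [MeasurableSpace X] (E : X → X → Prop) : Prop :=
  ∀ B : Set X, MeasurableSet B →
    ∀ ν : Measure X, IsProbabilityMeasure ν → ν Bᶜ = 0 → InvariantOn E B ν →
      ∃ C : Set X, MeasurableSet C ∧ C ⊆ B ∧ ν (B \ C) = 0 ∧ HyperfiniteOn E C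

end Defs

/-!
If `A • v = r • v` with `r > 0`, then `r` is a root of `t ^ 2 - tr A * t + 1`, so `r + r⁻¹` is an
integer and no `A` scales `v` by a factor in `(1, 2)`. If `v` is not proportional to an integer
vector, only the identity fixes `v`, so `A ↦ log r` embeds the ray stabilizer into a subgroup of `ℝ`
that misses `(0, log 2)`, and such a subgroup is cyclic. Otherwise `v` is a multiple of a primitive
integer vector `w`; every such `r` is then an integer unit, hence `1`, and the ray stabilizer is the
stabilizer of `w`, a conjugate of the infinite cyclic group generated by `T = !![1, 1; 0, 1]`.
-/

open Matrix MatrixGroups MulAction Subgroup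

theorem eq_of_smul_eq_smul {G α : Type*} [Group G] [MulAction G α] {a : α}
    (hfix : ∀ g : G, g • a = a → g = 1) {g h : G} (hgh : g • a = h • a) : g = h :=
  (inv_mul_eq_one.1 (hfix _ (by rw [mul_smul, hgh, inv_smul_smul]))).symm

theorem coe_zpowers_eq_singleton_one_or_infinite_cyclic {G : Type*} [Group G] {B : G}
    (hB : IsOfFinOrder B → B = 1) :
    (zpowers B : Set G) = {1} ∨ ∃ C ∈ zpowers B, (∀ A ∈ zpowers B, ∃ n : ℤ, A = C ^ n) ∧
      ∀ n : ℤ, n ≠ 0 → C ^ n ≠ 1 := by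
  by_cases hfin : IsOfFinOrder B
  · left
    rw [hB hfin, zpowers_one_eq_bot, coe_bot]
  · right
    refine ⟨B, mem_zpowers B, fun A hA => ?_, fun n hn h => hfin ?_⟩
    · obtain ⟨n, rfl⟩ := mem_zpowers_iff.1 hA
      exact ⟨n, rfl⟩
    · exact isOfFinOrder_iff_zpow_eq_one.2 ⟨n, hn, h⟩

section RayStabilizer

variable {Γ M : Type*} [Group Γ] [AddCommGroup M] [Module ℝ M] [DistribMulAction Γ M]
  [SMulCommClass ℝ Γ M]

theorem mem_stabilizer_rayOfNeZero_iff {v : M} (hv : v ≠ 0) {g : Γ} :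
    g ∈ stabilizer Γ (rayOfNeZero ℝ v hv) ↔ ∃ r : ℝ, 0 < r ∧ g • v = r • v := by
  rw [mem_stabilizer_iff, smul_rayOfNeZero, ray_eq_iff, SameRay.sameRay_comm,
    ← exists_pos_left_iff_sameRay hv ((smul_ne_zero_iff_ne g).2 hv)]
  simp only [eq_comm]

theorem mul_smul_eq_of_smul_eq {g h : Γ} {v : M} {r s : ℝ} (hg : g • v = r • v)
    (hh : h • v = s • v) : (g * h) • v = (r * s) • v := by
  rw [mul_smul, hh, ← smul_comm, hg, smul_smul, mul_comm]

theorem inv_smul_eq_of_smul_eq {g : Γ} {v : M} {r : ℝ} (hr : r ≠ 0) (hg : g • v = r • v) :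
    g⁻¹ • v = r⁻¹ • v := by
  rw [inv_smul_eq_iff, ← smul_comm, hg, smul_smul, inv_mul_cancel₀ hr, one_smul]

theorem zpow_smul_eq_of_smul_eq {g : Γ} {v : M} {r : ℝ} (hr : r ≠ 0) (hg : g • v = r • v)
    (n : ℤ) : g ^ n • v = r ^ n • v := by
  induction n using Int.induction_on with
  | zero => simp
  | succ k ih => rw [_root_.zpow_add_one, zpow_add_one₀ hr, mul_smul_eq_of_smul_eq ih hg]
  | pred k ih =>
    rw [_root_.zpow_sub_one, zpow_sub_one₀ hr,
      mul_smul_eq_of_smul_eq ih (inv_smul_eq_of_smul_eq hr hg)]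

variable (Γ) in
def logEigenvalues (v : M) : AddSubgroup ℝ where
  carrier := {x | ∃ g : Γ, g • v = Real.exp x • v}
  zero_mem' := ⟨1, by simp⟩
  add_mem' := by
    rintro x y ⟨g, hg⟩ ⟨h, hh⟩
    exact ⟨g * h, by rw [mul_smul_eq_of_smul_eq hg hh, Real.exp_add]⟩
  neg_mem' := by
    rintro x ⟨g, hg⟩
    exact ⟨g⁻¹, by rw [inv_smul_eq_of_smul_eq (Real.exp_pos x).ne' hg, Real.exp_neg]⟩

theorem exists_stabilizer_rayOfNeZero_eq_zpowers {v : M} (hv : v ≠ 0)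
    (hfix : ∀ g : Γ, g • v = v → g = 1) {δ : ℝ} (hδ : 1 < δ)
    (hgap : ∀ (g : Γ) (t : ℝ), 1 < t → t < δ → g • v ≠ t • v) :
    ∃ B : Γ, stabilizer Γ (rayOfNeZero ℝ v hv) = zpowers B ∧ (IsOfFinOrder B → B = 1) := by
  have hdisj : Disjoint (logEigenvalues Γ v : Set ℝ) (Set.Ioo 0 (Real.log δ)) := by
    refine Set.disjoint_left.2 fun x ⟨g, hg⟩ ⟨hx0, hxδ⟩ => hgap g _ ?_ ?_ hg
    · exact Real.one_lt_exp_iff.2 hx0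
    · exact (Real.lt_log_iff_exp_lt (by linarith)).1 hxδ
  obtain ⟨a, ha⟩ := AddSubgroup.cyclic_of_isolated_zero (Real.log_pos hδ) hdisj
  obtain ⟨B, hB⟩ : a ∈ logEigenvalues Γ v := ha ▸ AddSubgroup.subset_closure rfl
  have hBpow (n : ℤ) : B ^ n • v = Real.exp (a * n) • v := by
    rw [zpow_smul_eq_of_smul_eq (Real.exp_pos a).ne' hB, Real.exp_mul, Real.rpow_intCast]
  refine ⟨B, le_antisymm (fun g hg => ?_) ?_, fun hfin => ?_⟩
  · obtain ⟨r, hr, hgr⟩ := (mem_stabilizer_rayOfNeZero_iff hv).1 hg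
    have hlog : Real.log r ∈ logEigenvalues Γ v := ⟨g, by rwa [Real.exp_log hr]⟩
    rw [ha, AddSubgroup.mem_closure_singleton] at hlog
    obtain ⟨n, hn⟩ := hlog
    refine mem_zpowers_iff.2 ⟨n, eq_of_smul_eq_smul hfix ?_⟩
    rw [hBpow, hgr, ← Real.exp_log hr, ← hn, zsmul_eq_mul, mul_comm]
  · exact zpowers_le.2 ((mem_stabilizer_rayOfNeZero_iff hv).2 ⟨_, Real.exp_pos a, hB⟩)
  · obtain ⟨n, hn, hBn⟩ := isOfFinOrder_iff_zpow_eq_one.1 hfin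
    have h1 : Real.exp (a * n) = 1 := by
      apply smul_left_injective ℝ hv
      simp only [← hBpow, hBn, one_smul]
    have ha0 : a = 0 := by
      simpa [hn] using Real.exp_eq_one_iff _ |>.1 h1
    exact hfix B (by rw [hB, ha0, Real.exp_zero, one_smul])

end RayStabilizer

theorem Matrix.sq_sub_trace_mul_add_det_eq_zero_of_mulVec_eq_smul {K : Type*} [Field K]
    {A : Matrix (Fin 2) (Fin 2) K} {v : Fin 2 → K} (hv : v ≠ 0) {t : K} (h : A *ᵥ v = t • v) :
    t ^ 2 - A.trace * t + A.det = 0 := by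
  have hdet : (t • 1 - A).det = 0 :=
    exists_mulVec_eq_zero_iff.1 ⟨v, hv, by rw [sub_mulVec, smul_mulVec, one_mulVec, h, sub_self]⟩
  rw [det_fin_two] at hdet ⊢
  simp [trace_fin_two] at hdet ⊢
  linear_combination hdet

theorem exists_isCoprime_eq_smul_intCast {v : Fin 2 → ℝ} {a b : ℤ} (hab : ¬(a = 0 ∧ b = 0))
    (h : (a : ℝ) * v 0 + b * v 1 = 0) :
    ∃ (t : ℝ) (w : Fin 2 → ℤ), IsCoprime (w 0) (w 1) ∧ v = t • (Int.cast ∘ w) := by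
  obtain ⟨g, a', b', hg, hgcd, rfl, rfl⟩ :=
    Int.exists_gcd_one' (Nat.pos_of_ne_zero (mt Int.gcd_eq_zero_iff.1 hab))
  have h' : (a' : ℝ) * v 0 + b' * v 1 = 0 := by
    have hg' : (g : ℝ) ≠ 0 := by positivity
    push_cast at h
    refine (mul_eq_zero.1 ?_).resolve_left hg'
    linear_combination h
  obtain ⟨x, y, hxy⟩ : IsCoprime b' (-a') :=
    (Int.isCoprime_iff_gcd_eq_one.2 hgcd).symm.neg_right
  have hxy' : (x : ℝ) * b' + y * (-a') = 1 := by exact_mod_cast hxy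
  refine ⟨x * v 0 + y * v 1, ![b', -a'], ⟨x, y, hxy⟩, funext fun i => ?_⟩
  fin_cases i <;> simp
  · linear_combination (-v 0) * hxy' - y * h'
  · linear_combination (-v 1) * hxy' + x * h'

-- `r` is an integer because `w` is primitive, and a unit because `u` is.
theorem eq_of_intCast_eq_smul_intCast {u w : Fin 2 → ℤ} (hu : IsCoprime (u 0) (u 1))
    (hw : IsCoprime (w 0) (w 1)) {r : ℝ} (hr : 0 < r)
    (h : (Int.cast ∘ u : Fin 2 → ℝ) = r • (Int.cast ∘ w)) : u = w := by
  obtain ⟨x, y, hxy⟩ := hw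
  have hu' (i : Fin 2) : (u i : ℝ) = r * w i := congrFun h i
  have hr' : r = ((x * u 0 + y * u 1 : ℤ) : ℝ) := by
    push_cast
    rw [hu', hu']
    linear_combination (-r) * (by exact_mod_cast hxy : (x : ℝ) * w 0 + y * w 1 = 1)
  set p := x * u 0 + y * u 1
  have hup (i : Fin 2) : u i = p * w i := by
    have := hu' i
    rw [hr'] at this
    exact_mod_cast this
  have hp : p = 1 := by
    have hunit : IsUnit p := hu.isUnit_of_dvd' ⟨w 0, hup 0⟩ ⟨w 1, hup 1⟩
    have hpos : 0 < p := by exact_mod_cast hr' ▸ hr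
    rcases Int.isUnit_iff.1 hunit with h1 | h1 <;> omega
  funext i
  rw [hup, hp, one_mul]

theorem ModularGroup.not_isOfFinOrder_T : ¬IsOfFinOrder ModularGroup.T := by
  rw [isOfFinOrder_iff_zpow_eq_one]
  rintro ⟨n, hn, hTn⟩
  have h01 := congrArg (fun B : SL(2, ℤ) => B 0 1) hTn
  simp [ModularGroup.coe_T_zpow] at h01
  exact hn h01

instance : DistribMulAction SL(2, ℤ) (Fin 2 → ℝ) :=
  DistribMulAction.compHom _ (Matrix.SpecialLinearGroup.map (Int.castRingHom ℝ))

instance : SMulCommClass ℝ SL(2, ℤ) (Fin 2 → ℝ) where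
  smul_comm r A v := (smul_comm (A : SL(2, ℝ)) r v).symm

namespace SL2Z

theorem smul_def (A : SL(2, ℤ)) (v : Fin 2 → ℝ) :
    A • v = (A : Matrix (Fin 2) (Fin 2) ℤ).map (Int.cast) *ᵥ v :=
  rfl

theorem smul_intCast (A : SL(2, ℤ)) (w : Fin 2 → ℤ) :
    A • (Int.cast ∘ w : Fin 2 → ℝ) = Int.cast ∘ (A • w) :=
  funext fun i =>
    (RingHom.map_mulVec (Int.castRingHom ℝ) (A : Matrix (Fin 2) (Fin 2) ℤ) w i).symm

theorem smul_ne_smul_of_one_lt_of_lt_two {v : Fin 2 → ℝ} (hv : v ≠ 0) (A : SL(2, ℤ)) {t : ℝ}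
    (h1 : 1 < t) (h2 : t < 2) : A • v ≠ t • v := by
  intro h
  set A' := (A : Matrix (Fin 2) (Fin 2) ℤ).map (Int.cast : ℤ → ℝ)
  have hdet : A'.det = 1 := (A : SL(2, ℝ)).2
  have hchar := sq_sub_trace_mul_add_det_eq_zero_of_mulVec_eq_smul (A := A') hv h
  rw [hdet, trace_fin_two] at hchar
  simp only [A', map_apply] at hchar
  have hgt : (2 : ℝ) < (A 0 0 + A 1 1 : ℤ) := by push_cast; nlinarith
  have hlt : ((A 0 0 + A 1 1 : ℤ) : ℝ) < 3 := by push_cast; nlinarith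
  norm_cast at hgt hlt
  omega

theorem eq_one_of_smul_eq_self {v : Fin 2 → ℝ}
    (hv : ∀ a b : ℤ, (a : ℝ) * v 0 + b * v 1 = 0 → a = 0 ∧ b = 0) {A : SL(2, ℤ)}
    (h : A • v = v) : A = 1 := by
  have h0 := congrFun h 0
  have h1 := congrFun h 1
  simp only [smul_def, mulVec, dotProduct, Fin.sum_univ_two, map_apply] at h0 h1
  obtain ⟨h00, h01⟩ := hv (A 0 0 - 1) (A 0 1) (by push_cast; linarith)
  obtain ⟨h10, h11⟩ := hv (A 1 0) (A 1 1 - 1) (by push_cast; linarith)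
  ext i j
  fin_cases i <;> fin_cases j <;> simp <;> omega

theorem stabilizer_rayOfNeZero_smul_intCast {w : Fin 2 → ℤ} (hw : IsCoprime (w 0) (w 1)) {t : ℝ}
    (htw : t • (Int.cast ∘ w : Fin 2 → ℝ) ≠ 0) :
    stabilizer SL(2, ℤ) (rayOfNeZero ℝ _ htw) = stabilizer SL(2, ℤ) w := by
  have ht : t ≠ 0 := left_ne_zero_of_smul htw
  ext A
  rw [mem_stabilizer_rayOfNeZero_iff, mem_stabilizer_iff, ← smul_comm, smul_intCast]
  constructor
  · rintro ⟨r, hr, hA⟩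
    rw [smul_comm r t] at hA
    exact eq_of_intCast_eq_smul_intCast (IsCoprime.mulVecSL hw A) hw hr
      (smul_right_injective _ ht hA)
  · intro hA
    exact ⟨1, one_pos, by rw [hA, one_smul]⟩

theorem stabilizer_vecCons_one_zero :
    stabilizer SL(2, ℤ) (![1, 0] : Fin 2 → ℤ) = zpowers ModularGroup.T := by
  refine le_antisymm (fun A hA => ?_) (zpowers_le.2 ?_)
  · have hA' := mem_stabilizer_iff.1 hA
    rw [Matrix.SpecialLinearGroup.smul_def] at hA'
    have h0 := congrFun hA' 0
    have h1 := congrFun hA' 1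
    simp [mulVec, dotProduct, Fin.sum_univ_two] at h0 h1
    have hdet := Matrix.SpecialLinearGroup.det_coe A
    rw [det_fin_two, h0, h1, one_mul, mul_zero, sub_zero] at hdet
    refine mem_zpowers_iff.2 ⟨A 0 1, Subtype.ext ?_⟩
    rw [ModularGroup.coe_T_zpow]
    ext i j
    fin_cases i <;> fin_cases j <;> simp [h0, h1, hdet]
  · rw [mem_stabilizer_iff, Matrix.SpecialLinearGroup.smul_def]
    ext i
    fin_cases i <;> simp [mulVec, dotProduct, Fin.sum_univ_two]

theorem exists_stabilizer_eq_zpowers {w : Fin 2 → ℤ} (hw : IsCoprime (w 0) (w 1)) :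
    ∃ B : SL(2, ℤ), stabilizer SL(2, ℤ) w = zpowers B ∧ ¬IsOfFinOrder B := by
  obtain ⟨P, hP0, hP1⟩ := hw.exists_SL2_col 0
  have hPw : P • (![1, 0] : Fin 2 → ℤ) = w := by
    rw [Matrix.SpecialLinearGroup.smul_def]
    ext i
    fin_cases i <;> simp [mulVec, dotProduct, Fin.sum_univ_two, hP0, hP1]
  let conjP := (MulAut.conj P).toMonoidHom
  refine ⟨conjP ModularGroup.T, ?_, ?_⟩
  · rw [← hPw, stabilizer_smul_eq_stabilizer_map_conj, stabilizer_vecCons_one_zero,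
      MonoidHom.map_zpowers]
  · exact (Function.Injective.isOfFinOrder_iff (f := conjP) (MulEquiv.injective _)).not.2
      ModularGroup.not_isOfFinOrder_T

end SL2Z

theorem sl2z_ray_stabilizer_trivial_or_infinite_cyclic
    (v : Fin 2 → ℝ) (hv : v ≠ 0)
    (S : Set (Matrix.SpecialLinearGroup (Fin 2) ℤ))
    (hS : S = {A : Matrix.SpecialLinearGroup (Fin 2) ℤ | ∃ r : ℝ, 0 < r ∧
      ((A : Matrix (Fin 2) (Fin 2) ℤ).map (fun n : ℤ => (n : ℝ))).mulVec v = r • v}) :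
    S = {1} ∨
      ∃ B ∈ S, (∀ A ∈ S, ∃ n : ℤ, A = B ^ n) ∧ (∀ n : ℤ, n ≠ 0 → B ^ n ≠ 1) := by
  have hSray : S = stabilizer SL(2, ℤ) (rayOfNeZero ℝ v hv) :=
    hS.trans (Set.ext fun A => (mem_stabilizer_rayOfNeZero_iff (g := A) hv).symm)
  obtain ⟨B, hB, hBfin⟩ :
      ∃ B : SL(2, ℤ), stabilizer SL(2, ℤ) (rayOfNeZero ℝ v hv) = zpowers B ∧
        (IsOfFinOrder B → B = 1) := by
    by_cases hirr : ∀ a b : ℤ, (a : ℝ) * v 0 + b * v 1 = 0 → a = 0 ∧ b = 0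
    · exact exists_stabilizer_rayOfNeZero_eq_zpowers hv
        (fun A => SL2Z.eq_one_of_smul_eq_self hirr) one_lt_two
        fun A t => SL2Z.smul_ne_smul_of_one_lt_of_lt_two hv A
    · simp only [not_forall] at hirr
      obtain ⟨a, b, hrel, hab⟩ := hirr
      obtain ⟨t, w, hw, rfl⟩ := exists_isCoprime_eq_smul_intCast hab hrel
      obtain ⟨B, hB, hBinf⟩ := SL2Z.exists_stabilizer_eq_zpowers hw
      exact ⟨B, (SL2Z.stabilizer_rayOfNeZero_smul_intCast hw hv).trans hB,
        fun h => (hBinf h).elim⟩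
  rw [hSray, hB]
  exact coe_zpowers_eq_singleton_one_or_infinite_cyclic hBfin
end

section
/- Suppose that Γ is a countable discrete group, X is a standard Borel space, and Γ ↷ X is a Borel action such that: (1) the induced orbit equivalence relation on X is hyperfinite; (2) for every x ∈ X the stabilizer subgroup Γ_x is a hyperfinite group, meaning that every Borel action of Γ_x on a standard Borel space induces a hyperfinite orbit equivalence relation; and (3) only countably many points of X have infinite stabilizers. Then the action Γ ↷ X is productively hyperfinite: for every standard Borel space Y and every Borel action Γ ↷ Y, the orbit equivalence relation on X × Y induced by the diagonal action γ·(x,y) = (γ·x, γ·y) is hyperfinite. -/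
open MeasureTheory

/-- A group is hyperfinite if each of its Borel actions on a standard Borel space induces a
hyperfinite orbit equivalence relation. -/
def HyperfiniteGroup (G : Type*) [Group G] : Prop :=
  ∀ (Z : Type) [MeasurableSpace Z] [StandardBorelSpace Z] (σ : G → Z → Z),
    (∀ z, σ 1 z = z) → (∀ g h z, σ (g * h) z = σ g (σ h z)) →
    (∀ g, Measurable (σ g)) →
    Hyperfinite (fun z w => ∃ g : G, σ g z = w)

/-!
Let `T` be the set of points of `X` with infinite stabilizer. Stabilizers along an orbit are
conjugate, so `T` is `Γ`-invariant, and it is countable; hence `X × Y` splits into the invariant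
Borel pieces `T × Y` and `Tᶜ × Y`, and each can be treated separately.

Over `Tᶜ` all stabilizers are finite, so intersecting the diagonal orbit relation with the
pullback of a hyperfinite filtration of the orbit relation on `X` already has finite classes.

Over `T`, fix a base point `c` in each orbit and send `(x, y)` to `g • y`, where `g • x = c`:
two points of `T × Y` over the same orbit are related iff their images are related by the
stabilizer of `c`, which is hyperfinite by assumption. As `T` is countable, the `n`-th stage of
the filtration can be confined to the first `n` points of `T`, which keeps its classes finite.
-/

open Set Function

section Hyperfinite

variable {X X' Y Z K : Type*}

-- `E` restricted to `A` without passing to a subtype; equality off `A` keeps it reflexive.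
def restrictOrEq (E : X → X → Prop) (A : Set X) (x y : X) : Prop := x = y ∨ x ∈ A ∧ E x y

theorem restrictOrEq_congr {E E' : X → X → Prop} {A : Set X} (h : ∀ x ∈ A, ∀ y, E x y ↔ E' x y) :
    restrictOrEq E A = restrictOrEq E' A :=
  funext fun x => funext fun y => propext (or_congr_right (and_congr_right fun hx => h x hx y))

theorem restrictOrEq.rel {E : X → X → Prop} {A : Set X} (hE : ∀ x, E x x) {x y : X}
    (h : restrictOrEq E A x y) : E x y :=
  h.elim (· ▸ hE x) And.right

theorem restrictOrEq.mem_iff {E : X → X → Prop} {A B : Set X}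
    (hB : ∀ x y, E x y → (x ∈ B ↔ y ∈ B)) {x y : X} (h : restrictOrEq E A x y) :
    x ∈ B ↔ y ∈ B :=
  h.elim (· ▸ Iff.rfl) fun h => hB x y h.2

theorem Equivalence.restrictOrEq {E : X → X → Prop} {A : Set X} (hE : Equivalence E)
    (hA : ∀ x y, E x y → (x ∈ A ↔ y ∈ A)) : Equivalence (restrictOrEq E A) where
  refl _ := .inl rfl
  symm := by
    rintro x y (rfl | ⟨hx, hxy⟩)
    exacts [.inl rfl, .inr ⟨(hA x y hxy).1 hx, hE.symm hxy⟩]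
  trans := by
    rintro x y z (rfl | ⟨hx, hxy⟩) (rfl | ⟨hy, hyz⟩)
    exacts [.inl rfl, .inr ⟨hy, hyz⟩, .inr ⟨hx, hxy⟩, .inr ⟨hx, hE.trans hxy hyz⟩]

variable [MeasurableSpace X]

theorem measurableSet_restrictOrEq [MeasurableEq X] {E : X → X → Prop} {A : Set X}
    (hA : MeasurableSet A) (hE : MeasurableSet {p : X × X | E p.1 p.2}) :
    MeasurableSet {p : X × X | restrictOrEq E A p.1 p.2} :=
  measurableSet_diagonal.union ((measurable_fst hA).inter hE)

theorem measurableSet_exists_smul_eq {G : Type*} [SMul G X] [Countable G] [MeasurableEq X]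
    (h : ∀ g : G, Measurable (g • · : X → X)) :
    MeasurableSet {p : X × X | ∃ g : G, g • p.1 = p.2} := by
  simp only [ofPred_exists]
  exact .iUnion fun g => measurableSet_eq_fun ((h g).comp measurable_fst) measurable_snd

theorem Hyperfinite.of_restrictOrEq {E : X → X → Prop} {A : Set X} (hE : ∀ x, E x x)
    (hA : MeasurableSet A) (hAE : ∀ x y, E x y → (x ∈ A ↔ y ∈ A))
    (h₁ : Hyperfinite (restrictOrEq E A)) (h₂ : Hyperfinite (restrictOrEq E Aᶜ)) :
    Hyperfinite E := by
  obtain ⟨F, hFeq, hFm, hFE, hFfin, hFmono, hFex⟩ := h₁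
  obtain ⟨F', hF'eq, hF'm, hF'E, hF'fin, hF'mono, hF'ex⟩ := h₂
  have hF_mem n x y (h : F n x y) : x ∈ A ↔ y ∈ A := (hFE n x y h).mem_iff hAE
  have hF'_mem n x y (h : F' n x y) : x ∈ A ↔ y ∈ A := (hF'E n x y h).mem_iff hAE
  refine ⟨fun n x y => x ∈ A ∧ F n x y ∨ x ∉ A ∧ F' n x y, fun n => ⟨fun x => ?_, ?_, ?_⟩,
    fun n => ?_, ?_, fun n x => ?_, ?_, ?_⟩
  · by_cases hx : x ∈ A
    exacts [.inl ⟨hx, (hFeq n).refl x⟩, .inr ⟨hx, (hF'eq n).refl x⟩]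
  · rintro x y (⟨hx, h⟩ | ⟨hx, h⟩)
    · exact .inl ⟨(hF_mem n x y h).1 hx, (hFeq n).symm h⟩
    · exact .inr ⟨mt (hF'_mem n x y h).2 hx, (hF'eq n).symm h⟩
  · rintro x y z (⟨hx, h⟩ | ⟨hx, h⟩) (⟨hy, h'⟩ | ⟨hy, h'⟩)
    · exact .inl ⟨hx, (hFeq n).trans h h'⟩
    · exact absurd ((hF_mem n x y h).1 hx) hy
    · exact absurd ((hF'_mem n x y h).2 hy) hx
    · exact .inr ⟨hx, (hF'eq n).trans h h'⟩
  · simp only [ofPred_or, ofPred_and]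
    exact ((measurable_fst hA).inter (hFm n)).union ((measurable_fst hA.compl).inter (hF'm n))
  · rintro n x y (⟨-, h⟩ | ⟨-, h⟩)
    exacts [(hFE n x y h).rel hE, (hF'E n x y h).rel hE]
  · exact ((hFfin n x).union (hF'fin n x)).subset fun y hy => hy.imp And.right And.right
  · rintro m n hmn x y (⟨hx, h⟩ | ⟨hx, h⟩)
    exacts [.inl ⟨hx, hFmono m n hmn x y h⟩, .inr ⟨hx, hF'mono m n hmn x y h⟩]
  · intro x y hxy
    by_cases hx : x ∈ A
    · obtain ⟨n, hn⟩ := hFex x y (.inr ⟨hx, hxy⟩)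
      exact ⟨n, .inl ⟨hx, hn⟩⟩
    · obtain ⟨n, hn⟩ := hF'ex x y (.inr ⟨hx, hxy⟩)
      exact ⟨n, .inr ⟨hx, hn⟩⟩

theorem Hyperfinite.of_finite_fibers [MeasurableSpace X'] {E : X → X → Prop}
    {E' : X' → X' → Prop} (hE : Hyperfinite E) (hE' : Equivalence E')
    (hE'm : MeasurableSet {p : X' × X' | E' p.1 p.2}) {f : X' → X} (hf : Measurable f)
    (hfE : ∀ x y, E' x y → E (f x) (f y)) (hfin : ∀ x z, {y | E' x y ∧ f y = z}.Finite) :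
    Hyperfinite E' := by
  obtain ⟨F, hFeq, hFm, -, hFfin, hFmono, hFex⟩ := hE
  refine ⟨fun n x y => E' x y ∧ F n (f x) (f y),
    fun n => ⟨fun x => ⟨hE'.refl x, (hFeq n).refl _⟩, fun h => ⟨hE'.symm h.1, (hFeq n).symm h.2⟩,
      fun h h' => ⟨hE'.trans h.1 h'.1, (hFeq n).trans h.2 h'.2⟩⟩,
    fun n => hE'm.inter ((hf.prodMap hf) (hFm n)), fun n x y h => h.1, fun n x => ?_,
    fun m n hmn x y h => ⟨h.1, hFmono m n hmn _ _ h.2⟩, fun x y h => ?_⟩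
  · refine ((hFfin n (f x)).biUnion fun z _ => hfin x z).subset fun y hy => ?_
    exact mem_biUnion hy.2 ⟨hy.1, rfl⟩
  · obtain ⟨n, hn⟩ := hFex _ _ (hfE x y h)
    exact ⟨n, h, hn⟩

theorem measurableSet_of_countable_fst [MeasurableSpace Y] [MeasurableSingletonClass X]
    {S : Set X} (hS : S.Countable) {R : X × Y → X × Y → Prop}
    (hR : ∀ p q, R p q → p.1 ∈ S ∧ q.1 ∈ S)
    (hslice : ∀ s s', MeasurableSet {y : Y × Y | R (s, y.1) (s', y.2)}) :
    MeasurableSet {pq : (X × Y) × (X × Y) | R pq.1 pq.2} := by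
  have hslices : {pq : (X × Y) × (X × Y) | R pq.1 pq.2} = ⋃ s ∈ S, ⋃ s' ∈ S,
      {pq | pq.1.1 = s} ∩ {pq | pq.2.1 = s'} ∩
        (fun pq => (pq.1.2, pq.2.2)) ⁻¹' {y : Y × Y | R (s, y.1) (s', y.2)} := by
    ext ⟨⟨x, y⟩, ⟨x', y'⟩⟩
    simp only [mem_ofPred_eq, mem_iUnion, mem_inter_iff, mem_preimage, exists_prop]
    refine ⟨fun h => ⟨x, (hR _ _ h).1, x', (hR _ _ h).2, ⟨rfl, rfl⟩, h⟩, ?_⟩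
    rintro ⟨_, _, _, _, ⟨rfl, rfl⟩, h⟩
    exact h
  rw [hslices]
  exact .biUnion hS fun s _ => .biUnion hS fun s' _ =>
    ((measurable_fst.fst (measurableSet_singleton s)).inter
      (measurable_snd.fst (measurableSet_singleton s'))).inter
      ((measurable_fst.snd.prodMk measurable_snd.snd) (hslice s s'))

theorem hyperfinite_restrictOrEq_of_countable [MeasurableSpace Y] [MeasurableSpace Z]
    [MeasurableSingletonClass X] [MeasurableEq (X × Y)] {S : Set X} (hS : S.Countable)
    (κ : X → K) {E : K → Z → Z → Prop} (hE : ∀ k, Hyperfinite (E k)) {φ : X → Y → Z}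
    (hφm : ∀ x, Measurable (φ x)) (hφinj : ∀ x, Injective (φ x)) :
    Hyperfinite (restrictOrEq
      (fun p q : X × Y => q.1 ∈ S ∧ κ p.1 = κ q.1 ∧ E (κ p.1) (φ p.1 p.2) (φ q.1 q.2))
      (Prod.fst ⁻¹' S)) := by
  choose G hGeq hGm hGE hGfin hGmono hGex using hE
  obtain ⟨ι, hι⟩ := countable_iff_exists_injOn.1 hS
  -- the `n`-th stage only involves the finitely many slices `{s} × Y` with `ι s ≤ n`
  let H (n : ℕ) (p q : X × Y) : Prop := p.1 ∈ S ∧ q.1 ∈ S ∧ κ p.1 = κ q.1 ∧ ι p.1 ≤ n ∧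
    ι q.1 ≤ n ∧ G (κ p.1) n (φ p.1 p.2) (φ q.1 q.2)
  refine ⟨fun n p q => p = q ∨ H n p q, fun n => ⟨fun p => .inl rfl, ?_, ?_⟩, fun n => ?_,
    ?_, fun n p => ?_, ?_, ?_⟩
  · rintro p q (rfl | ⟨hp, hq, hκ, hιp, hιq, h⟩)
    · exact .inl rfl
    · refine .inr ⟨hq, hp, hκ.symm, hιq, hιp, ?_⟩
      rw [← hκ]
      exact (hGeq _ n).symm h
  · rintro p q r (rfl | ⟨hp, hq, hκ, hιp, hιq, h⟩) (rfl | ⟨hq', hr, hκ', hιq', hιr, h'⟩)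
    · exact .inl rfl
    · exact .inr ⟨hq', hr, hκ', hιq', hιr, h'⟩
    · exact .inr ⟨hp, hq, hκ, hιp, hιq, h⟩
    · refine .inr ⟨hp, hr, hκ.trans hκ', hιp, hιr, (hGeq _ n).trans h ?_⟩
      rwa [hκ]
  · rw [ofPred_or]
    refine measurableSet_diagonal.union <|
      measurableSet_of_countable_fst (R := H n) hS (fun p q h => ⟨h.1, h.2.1⟩) fun s s' => ?_
    simp only [H, ofPred_and]
    refine (MeasurableSet.const _).inter <| (MeasurableSet.const _).inter <|
      (MeasurableSet.const _).inter <| (MeasurableSet.const _).inter <|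
      (MeasurableSet.const _).inter ?_
    exact (((hφm s).comp measurable_fst).prodMk ((hφm s').comp measurable_snd)) (hGm _ n)
  · rintro n p q (rfl | ⟨hp, hq, hκ, -, -, h⟩)
    exacts [.inl rfl, .inr ⟨hp, hq, hκ, hGE _ n _ _ h⟩]
  · have hfin : (S ∩ ι ⁻¹' Iic n).Finite :=
      ((finite_Iic n).subset (image_subset_iff.2 fun s hs => hs.2)).of_finite_image
        (hι.mono inter_subset_left)
    refine ((finite_singleton p).union (hfin.biUnion fun s _ =>
      (((hGfin (κ p.1) n (φ p.1 p.2)).preimage (hφinj s).injOn).image (Prod.mk s)))).subset ?_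
    rintro ⟨x, y⟩ (rfl | ⟨-, hx, -, -, hιx, h⟩)
    exacts [.inl rfl, .inr (mem_biUnion ⟨hx, hιx⟩ ⟨y, h, rfl⟩)]
  · rintro m n hmn p q (rfl | ⟨hp, hq, hκ, hιp, hιq, h⟩)
    exacts [.inl rfl, .inr ⟨hp, hq, hκ, hιp.trans hmn, hιq.trans hmn, hGmono _ m n hmn _ _ h⟩]
  · rintro p q (rfl | ⟨hp, hq, hκ, h⟩)
    · exact ⟨0, .inl rfl⟩
    · obtain ⟨m, hm⟩ := hGex _ _ _ h
      refine ⟨max m (max (ι p.1) (ι q.1)), .inr ⟨hp, hq, hκ, ?_, ?_, hGmono _ _ _ ?_ _ _ hm⟩⟩ <;>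
        omega

end Hyperfinite

namespace MulAction

variable {G α β : Type*} [Group G] [MulAction G α]

variable (G α) in
theorem equivalence_exists_smul_eq : Equivalence fun a b : α => ∃ g : G, g • a = b :=
  ⟨fun a => ⟨1, one_smul G a⟩, fun ⟨g, h⟩ => ⟨g⁻¹, h ▸ inv_smul_smul g _⟩,
    fun ⟨g, h⟩ ⟨g', h'⟩ => ⟨g' * g, by rw [mul_smul, h, h']⟩⟩

theorem finite_setOf_smul_eq {a : α} (ha : (stabilizer G a : Set G).Finite) (b : α) :
    {g : G | g • a = b}.Finite := by
  rcases eq_empty_or_nonempty {g : G | g • a = b} with h | ⟨g₀, hg₀⟩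
  · exact h ▸ finite_empty
  refine (ha.image (g₀ * ·)).subset fun g (hg : g • a = b) =>
    ⟨g₀⁻¹ * g, ?_, mul_inv_cancel_left g₀ g⟩
  rw [SetLike.mem_coe, mem_stabilizer_iff, mul_smul, hg, ← hg₀, inv_smul_smul]

theorem infinite_stabilizer_smul_iff (g : G) (a : α) :
    (stabilizer G (g • a) : Set G).Infinite ↔ (stabilizer G a : Set G).Infinite := by
  simp only [← infinite_coe_iff]
  exact (stabilizerEquivStabilizer rfl).toEquiv.infinite_iff.symm

theorem exists_smul_eq_prod_iff [MulAction G β] {p q : α × β} {c : α} {g g' : G}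
    (hg : g • p.1 = c) (hg' : g' • q.1 = c) :
    (∃ γ : G, γ • p = q) ↔ ∃ s : stabilizer G c, s • g • p.2 = g' • q.2 := by
  constructor
  · rintro ⟨γ, rfl⟩
    refine ⟨⟨g' * γ * g⁻¹, ?_⟩, ?_⟩
    · rw [mem_stabilizer_iff, mul_smul, mul_smul, ← hg, inv_smul_smul, hg, ← hg', Prod.smul_fst]
    · rw [Subgroup.mk_smul, mul_smul, mul_smul, inv_smul_smul, Prod.smul_snd]
  · rintro ⟨s, hs⟩
    refine ⟨g'⁻¹ * s * g, Prod.ext ?_ ?_⟩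
    · rw [Prod.smul_fst, mul_smul, mul_smul, hg, mem_stabilizer_iff.1 s.2, ← hg', inv_smul_smul]
    · rw [Prod.smul_snd, mul_smul, mul_smul, ← Subgroup.smul_def, hs, inv_smul_smul]

end MulAction

section DiagonalAction

open MulAction

variable {Γ X Y : Type*} [Group Γ] [MulAction Γ X] [MulAction Γ Y] [MeasurableSpace X]
  [MeasurableSpace Y]

theorem hyperfinite_restrictOrEq_orbit_of_countable [MeasurableSingletonClass X]
    [MeasurableEq (X × Y)] {S : Set X} (hS : S.Countable) (hSinv : ∀ (γ : Γ) x, γ • x ∈ S ↔ x ∈ S)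
    (hstab : ∀ x : X, Hyperfinite fun y y' : Y => ∃ s : stabilizer Γ x, s • y = y')
    (hYm : ∀ γ : Γ, Measurable (γ • · : Y → Y)) :
    Hyperfinite (restrictOrEq (fun p q : X × Y => ∃ γ : Γ, γ • p = q) (Prod.fst ⁻¹' S)) := by
  let κ : X → orbitRel.Quotient Γ X := Quotient.mk _
  choose g hg using fun x : X => orbitRel_apply.1 (Quotient.mk_out (s := orbitRel Γ X) x)
  have hκ : ∀ p q : X × Y, (∃ γ : Γ, γ • p = q) → κ p.1 = κ q.1 := by
    rintro p q ⟨γ, rfl⟩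
    exact orbitRel.Quotient.quotient_smul_eq.symm
  have h_iff : ∀ p q : X × Y, κ p.1 = κ q.1 →
      ((∃ γ : Γ, γ • p = q) ↔ ∃ s : stabilizer Γ (κ p.1).out, s • g p.1 • p.2 = g q.1 • q.2) :=
    fun p q hpq =>
      exists_smul_eq_prod_iff (hg p.1) ((hg q.1).trans (congrArg Quotient.out hpq.symm))
  rw [restrictOrEq_congr (E' := fun p q => q.1 ∈ S ∧ κ p.1 = κ q.1 ∧
    ∃ s : stabilizer Γ (κ p.1).out, s • g p.1 • p.2 = g q.1 • q.2)]
  · exact hyperfinite_restrictOrEq_of_countable hS κ (fun k => hstab k.out) (fun x => hYm (g x))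
      (fun x => MulAction.injective (g x))
  · refine fun p (hp : p.1 ∈ S) q => ⟨fun h => ⟨?_, hκ p q h, (h_iff p q (hκ p q h)).1 h⟩,
      fun ⟨_, hpq, hs⟩ => (h_iff p q hpq).2 hs⟩
    obtain ⟨γ, rfl⟩ := h
    exact (hSinv γ p.1).2 hp

theorem hyperfinite_restrictOrEq_orbit_of_finite_stabilizers [Countable Γ] [MeasurableEq (X × Y)]
    {S : Set X} (hS : MeasurableSet S) (hSinv : ∀ (γ : Γ) x, γ • x ∈ S ↔ x ∈ S)
    (hfin : ∀ x ∈ S, (stabilizer Γ x : Set Γ).Finite)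
    (hX : Hyperfinite fun x y : X => ∃ γ : Γ, γ • x = y)
    (hXm : ∀ γ : Γ, Measurable (γ • · : X → X)) (hYm : ∀ γ : Γ, Measurable (γ • · : Y → Y)) :
    Hyperfinite (restrictOrEq (fun p q : X × Y => ∃ γ : Γ, γ • p = q) (Prod.fst ⁻¹' S)) := by
  refine .of_finite_fibers hX ((equivalence_exists_smul_eq Γ (X × Y)).restrictOrEq ?_)
    (measurableSet_restrictOrEq (measurable_fst hS)
      (measurableSet_exists_smul_eq fun γ => (hXm γ).prodMap (hYm γ)))
    measurable_fst ?_ fun p x => ?_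
  · rintro p q ⟨γ, rfl⟩
    exact (hSinv γ p.1).symm
  · rintro p q (rfl | ⟨-, γ, rfl⟩)
    exacts [⟨1, one_smul Γ p.1⟩, ⟨γ, rfl⟩]
  by_cases hp : p.1 ∈ S
  · refine ((finite_singleton p).union
      ((finite_setOf_smul_eq (hfin _ hp) x).image (· • p))).subset ?_
    rintro q ⟨rfl | ⟨-, γ, rfl⟩, hγ⟩
    exacts [.inl rfl, .inr ⟨γ, hγ, rfl⟩]
  · refine (finite_singleton p).subset ?_
    rintro q ⟨rfl | ⟨hp', -⟩, -⟩
    exacts [rfl, absurd hp' hp]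

end DiagonalAction

theorem productively_hyperfinite_of_hyperfinite_stabilizers
    (Γ : Type) [Group Γ] [Countable Γ]
    (X : Type) [MeasurableSpace X] [StandardBorelSpace X]
    [MulAction Γ X] (hmeas : ∀ γ : Γ, Measurable (fun x : X => γ • x))
    (h1 : Hyperfinite (fun x y : X => ∃ γ : Γ, γ • x = y))
    (h2 : ∀ x : X, HyperfiniteGroup (MulAction.stabilizer Γ x))
    (h3 : {x : X | (MulAction.stabilizer Γ x : Set Γ).Infinite}.Countable) :
    ∀ (Y : Type) [MeasurableSpace Y] [StandardBorelSpace Y] (σ : Γ → Y → Y),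
      (∀ y, σ 1 y = y) → (∀ g h y, σ (g * h) y = σ g (σ h y)) →
      (∀ g, Measurable (σ g)) →
      Hyperfinite (fun p q : X × Y => ∃ γ : Γ, γ • p.1 = q.1 ∧ σ γ p.2 = q.2) := by
  intro Y _ _ σ hid hmul hσm
  let _ : MulAction Γ Y := { smul := σ, one_smul := hid, mul_smul := hmul }
  let T : Set X := {x | (MulAction.stabilizer Γ x : Set Γ).Infinite}
  have hT : ∀ (γ : Γ) x, γ • x ∈ T ↔ x ∈ T := MulAction.infinite_stabilizer_smul_iff
  suffices h : Hyperfinite fun p q : X × Y => ∃ γ : Γ, γ • p = q by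
    simp only [Prod.ext_iff, Prod.smul_fst, Prod.smul_snd] at h
    exact h
  refine .of_restrictOrEq (fun p => ⟨1, one_smul Γ p⟩) (measurable_fst h3.measurableSet)
    (fun p q ⟨γ, h⟩ => h ▸ (hT γ p.1).symm) ?_ ?_
  · exact hyperfinite_restrictOrEq_orbit_of_countable h3 hT
      (fun x => h2 x Y _ (one_smul _) mul_smul fun s => hσm s) hσm
  · exact hyperfinite_restrictOrEq_orbit_of_finite_stabilizers h3.measurableSet.compl
      (fun γ x => not_congr (hT γ x)) (fun x => not_infinite.1) h1 hmeas hσm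
end

section
/- Suppose that X and Y are standard Borel spaces, E and F are countable Borel equivalence relations on X and Y respectively, there is a countable-to-one Borel homomorphism from E to F, and F is projectively separable. Then E is projectively separable. -/
open MeasureTheory

theorem projectively_separable_of_countable_to_one_homomorphism
    {X Y : Type} [MeasurableSpace X] [StandardBorelSpace X]
    [MeasurableSpace Y] [StandardBorelSpace Y]
    (E : X → X → Prop) (F : Y → Y → Prop) (hE : IsCBER E) (hF : IsCBER F)
    (f : X → Y) (hf : Measurable f) (hfc : CountableToOne f)
    (hhom : ∀ x y, E x y → F (f x) (f y))
    (hps : ProjSeparable F) :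
    ProjSeparable E := by
  intro X' _ _ E' hE' μ hμ hnwh
  obtain ⟨R, hRmeas, hRcount, hR⟩ := hps X' E' hE' μ hμ hnwh
  refine ⟨(fun p : X' × X => (p.1, f p.2)) ⁻¹' R, ?_, ?_, ?_⟩
  · exact hRmeas.preimage (measurable_fst.prodMk (hf.comp measurable_snd))
  · intro x
    have h : {y | (x, f y) ∈ R} = ⋃ z ∈ {y | (x, y) ∈ R}, f ⁻¹' {z} := by
      ext y; simp
    show {y | (x, f y) ∈ R}.Countable
    rw [h]
    exact (hRcount x).biUnion (fun z _ => hfc z)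
  · intro B hB φ hφ hcφ hφhom
    have key := hR B hB (f ∘ φ) (hf.comp hφ) ?_ ?_
    · exact key
    · intro y
      have h : (f ∘ φ) ⁻¹' {y} = ⋃ z ∈ f ⁻¹' {y}, φ ⁻¹' {z} := by ext; simp
      rw [h]; exact (hfc y).biUnion (fun z _ => hcφ z)
    · exact fun x y h => hhom _ _ (hφhom x y h)
end
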